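/- arXiv:1701.07890 — 3 statements merged into one kernel-verified Lean document; each statement's English description precedes it below -/
import Mathlib

section
/- Euler's identity: for all complex z not an integer multiple of π, 1/sin(z)² = Σ_{n∈ℤ} 1/(z − nπ)². -/
/-!
Differentiating the Mittag-Leffler expansion of `π cot (π z)` gives
`π ^ 2 / sin (π z) ^ 2 = ∑ 1 / (z + n) ^ 2` on the upper half-plane. By the Weierstrass M-test the
series is continuous off `ℤ`, so the identity extends to the closed upper half-plane minus `ℤ`,
and both sides being even, to all of `ℂ ∖ ℤ`. The theorem is the case `z / π`.
-/

open scoped Real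
open Complex Set

theorem Complex.hasDerivAt_cot {z : ℂ} (hz : sin z ≠ 0) : HasDerivAt cot (-1 / sin z ^ 2) z := by
  rw [show cot = fun x => cos x / sin x from funext cot_eq_cos_div_sin]
  refine ((hasDerivAt_cos z).div (hasDerivAt_sin z) hz).congr_deriv ?_
  rw [← sin_sq_add_cos_sq z]
  ring

theorem Complex.neg_mem_integerComplement {z : ℂ} (hz : z ∈ integerComplement) :
    -z ∈ integerComplement := fun ⟨n, hn⟩ => hz ⟨-n, by simp [hn]⟩

theorem hasDerivAt_pi_mul_cot_pi_mul {z : ℂ} (hz : z ∈ integerComplement) :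
    HasDerivAt (fun x => π * cot (π * x)) (-π ^ 2 / sin (π * z) ^ 2) z := by
  refine (((hasDerivAt_cot (sin_pi_mul_ne_zero hz)).comp z
    ((hasDerivAt_id z).const_mul (π : ℂ))).const_mul (π : ℂ)).congr_deriv ?_
  ring

theorem pi_sq_div_sin_sq_eq_tsum_of_im_pos {z : ℂ} (hz : 0 < z.im) :
    π ^ 2 / sin (π * z) ^ 2 = ∑' n : ℤ, 1 / (z + n) ^ 2 := by
  have h := iteratedDerivWithin_cot_pi_mul_eq_mul_tsum_div_pow le_rfl hz
  rw [iteratedDerivWithin_one, derivWithin_of_isOpen UpperHalfPlane.isOpen_upperHalfPlaneSet hz,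
    (hasDerivAt_pi_mul_cot_pi_mul (UpperHalfPlane.coe_mem_integerComplement ⟨z, hz⟩)).deriv] at h
  norm_num [one_div] at h ⊢
  linear_combination -h

theorem norm_one_div_sq_le_of_le_two_mul_norm {𝕜 : Type*} [NormedDivisionRing 𝕜] {a b : 𝕜}
    (hb : b ≠ 0) (h : ‖b‖ ≤ 2 * ‖a‖) : ‖1 / a ^ 2‖ ≤ 4 * ‖1 / b ^ 2‖ := by
  have hb' : 0 < ‖b‖ := norm_pos_iff.mpr hb
  simp only [norm_div, norm_one, norm_pow]
  calc 1 / ‖a‖ ^ 2 ≤ 1 / (‖b‖ / 2) ^ 2 :=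
        one_div_le_one_div_of_le (by positivity) (pow_le_pow_left₀ (by positivity) (by linarith) 2)
    _ = 4 * (1 / ‖b‖ ^ 2) := by field_simp; norm_num

theorem continuousAt_tsum_one_div_add_intCast_sq {z : ℂ} (hz : z ∈ integerComplement) :
    ContinuousAt (fun w => ∑' n : ℤ, 1 / (w + (n : ℂ)) ^ 2) z := by
  obtain ⟨ε, hε, hball⟩ := Metric.isOpen_iff.mp isOpen_compl_range_intCast z hz
  have hfar (n : ℤ) : ε ≤ ‖z + n‖ := by
    by_contra! h
    refine hball ?_ ⟨-n, rfl⟩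
    rw [Metric.mem_ball, dist_eq, Int.cast_neg, ← norm_neg]
    simpa [add_comm] using h
  have hsum : Summable fun n : ℤ => 4 * ‖1 / (z + n) ^ 2‖ := by
    refine (summable_norm_iff.mpr ?_).mul_left 4
    simpa using EisensteinSeries.linear_right_summable z 1 (k := 2) le_rfl
  refine (continuousOn_tsum (fun n => ?_) hsum fun n w hw => ?_).continuousAt
    (Metric.ball_mem_nhds z (half_pos hε))
  · exact continuousOn_const.div (by fun_prop) fun w hw => pow_ne_zero 2 <|
      integerComplement_add_ne_zero (hball (Metric.ball_subset_ball (half_le_self hε.le) hw)) n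
  · refine norm_one_div_sq_le_of_le_two_mul_norm (integerComplement_add_ne_zero hz n) ?_
    have hwz : ‖z - w‖ < ε / 2 := by simpa [dist_eq, norm_sub_rev] using hw
    have htri : ‖z + n‖ ≤ ‖w + n‖ + ‖z - w‖ :=
      calc ‖z + n‖ = ‖(w + n) + (z - w)‖ := by ring_nf
        _ ≤ ‖w + n‖ + ‖z - w‖ := norm_add_le _ _
    linarith [hfar n]

theorem pi_sq_div_sin_sq_eq_tsum_of_im_nonneg {z : ℂ} (hz : z ∈ integerComplement)
    (him : 0 ≤ z.im) : π ^ 2 / sin (π * z) ^ 2 = ∑' n : ℤ, 1 / (z + n) ^ 2 := by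
  refine EqOn.of_subset_closure (s := {w : ℂ | 0 < w.im})
    (t := integerComplement ∩ {w : ℂ | 0 ≤ w.im})
    (fun w hw => pi_sq_div_sin_sq_eq_tsum_of_im_pos hw) (fun w hw => ?_)
    (fun w hw => (continuousAt_tsum_one_div_add_intCast_sq hw.1).continuousWithinAt)
    (fun w (hw : 0 < w.im) => ⟨UpperHalfPlane.coe_mem_integerComplement ⟨w, hw⟩, hw.le⟩)
    (fun w hw => by rw [closure_setOfPred_lt_im]; exact hw.2) ⟨hz, him⟩
  exact (continuousAt_const.div (g := fun w : ℂ => sin (π * w) ^ 2) (by fun_prop)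
    (pow_ne_zero 2 (sin_pi_mul_ne_zero hw.1))).continuousWithinAt

theorem pi_sq_div_sin_sq_eq_tsum {z : ℂ} (hz : z ∈ integerComplement) :
    π ^ 2 / sin (π * z) ^ 2 = ∑' n : ℤ, 1 / (z + n) ^ 2 := by
  rcases le_or_gt 0 z.im with him | him
  · exact pi_sq_div_sin_sq_eq_tsum_of_im_nonneg hz him
  · have h := pi_sq_div_sin_sq_eq_tsum_of_im_nonneg (neg_mem_integerComplement hz)
      (by simpa using him.le)
    rw [mul_neg, sin_neg, neg_sq, ← (Equiv.neg ℤ).tsum_eq] at h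
    rw [h]
    refine tsum_congr fun n => ?_
    rw [Equiv.neg_apply, Int.cast_neg]
    ring

theorem stmt11 (z : ℂ) (hz : ∀ n : ℤ, z ≠ (n : ℂ) * π) :
    1 / Complex.sin z ^ 2 = ∑' n : ℤ, 1 / (z - (n : ℂ) * π) ^ 2 := by
  have hπ : (π : ℂ) ≠ 0 := ofReal_ne_zero.mpr Real.pi_ne_zero
  have hw : z / π ∈ integerComplement := fun ⟨n, hn⟩ => hz n (by rw [hn, div_mul_cancel₀ z hπ])
  have key := pi_sq_div_sin_sq_eq_tsum hw
  rw [mul_div_cancel₀ z hπ] at key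
  calc 1 / sin z ^ 2 = 1 / π ^ 2 * ∑' n : ℤ, 1 / (z / π + n) ^ 2 := by
        rw [← key]; field_simp
    _ = ∑' n : ℤ, 1 / (z - (-n : ℤ) * π) ^ 2 := by
        rw [← tsum_mul_left]
        refine tsum_congr fun n => ?_
        push_cast
        field_simp
        ring
    _ = ∑' n : ℤ, 1 / (z - n * π) ^ 2 := (Equiv.neg ℤ).tsum_eq fun n : ℤ => 1 / (z - n * π) ^ 2
end

section
/- For Im τ > 0, the identity (i/2) Σ_{n=0}^∞ (2n+1)/sin((2n+1)πτ) = Σ_{n=0}^∞ σ₁(2n+1) e^{(2n+1)iπτ} holds, where σ₁(m) is the sum of positive divisors of m. -/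
open Complex
open scoped Real

private lemma sigma_subtype_ext' {α : Type*} {P : ℕ → α → Prop} (x y : Σ N : ℕ, {a : α // P N a})
    (h1 : x.1 = y.1) (h2 : (x.2 : α) = y.2) : x = y := by
  obtain ⟨N, a, ha⟩ := x
  obtain ⟨M, b, hb⟩ := y
  dsimp at h1
  subst h1
  dsimp at h2
  subst h2
  rfl

private def oddFactorEquiv' : (ℕ × ℕ) ≃ Σ N : ℕ, {p : ℕ × ℕ // p ∈ (2 * N + 1).divisorsAntidiagonal} where
  toFun p := ⟨((2 * p.1 + 1) * (2 * p.2 + 1) - 1) / 2,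
    ⟨(2 * p.1 + 1, 2 * p.2 + 1), by
      rw [Nat.mem_divisorsAntidiagonal]
      have hM : (2 * p.1 + 1) * (2 * p.2 + 1) = 2 * (2 * p.1 * p.2 + p.1 + p.2) + 1 := by ring
      constructor
      · simp only [hM]; omega
      · omega⟩⟩
  invFun s := ((s.2.1.1 - 1) / 2, (s.2.1.2 - 1) / 2)
  left_inv p := by simp
  right_inv s := by
    obtain ⟨N, ⟨⟨a, b⟩, hmem⟩⟩ := s
    have h := Nat.mem_divisorsAntidiagonal.mp hmem
    have hab : a * b = 2 * N + 1 := h.1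
    have ha : a % 2 = 1 := by
      rcases Nat.even_or_odd a with he | ho
      · exfalso
        obtain ⟨c, hc⟩ := he
        have : a * b = 2 * (c * b) := by rw [hc]; ring
        omega
      · obtain ⟨c, hc⟩ := ho; omega
    have hb : b % 2 = 1 := by
      rcases Nat.even_or_odd b with he | ho
      · exfalso
        obtain ⟨c, hc⟩ := he
        have : a * b = 2 * (a * c) := by rw [hc]; ring
        omega
      · obtain ⟨c, hc⟩ := ho; omega
    have ha' : 2 * ((a - 1) / 2) + 1 = a := by omega
    have hb' : 2 * ((b - 1) / 2) + 1 = b := by omega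
    apply sigma_subtype_ext'
    · dsimp only
      rw [ha', hb', hab]; omega
    · dsimp only
      rw [ha', hb']

private lemma sin_hasSum' (τ : ℂ) (hτ : 0 < τ.im) (m : ℕ) (hm : 0 < m) :
    HasSum (fun k : ℕ => Complex.exp (((m:ℂ) * (2 * k + 1)) * I * π * τ))
      ((I / 2) / Complex.sin ((m:ℂ) * π * τ)) := by
  set w : ℂ := Complex.exp ((m:ℂ) * I * π * τ) with hw
  have hnorm : ‖w‖ = Real.exp (-(π * τ.im)) ^ m := by
    rw [hw, Complex.norm_exp, ← Real.exp_nat_mul]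
    congr 1
    have : ((m:ℂ) * I * π * τ).re = -(m * (π * τ.im)) := by
      simp [Complex.mul_re, Complex.mul_im]; ring
    rw [this]; ring
  have hr1 : Real.exp (-(π * τ.im)) < 1 := by
    rw [Real.exp_lt_one_iff]
    have := Real.pi_pos
    nlinarith
  have hwlt : ‖w‖ < 1 := by
    rw [hnorm]; exact pow_lt_one₀ (Real.exp_pos _).le hr1 hm.ne'
  have hw0 : w ≠ 0 := Complex.exp_ne_zero _
  have hw2 : ‖w ^ 2‖ < 1 := by
    rw [norm_pow]
    exact pow_lt_one₀ (norm_nonneg _) hwlt (by norm_num)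
  have hgeo : HasSum (fun k : ℕ => w * (w ^ 2) ^ k) (w * (1 - w ^ 2)⁻¹) :=
    (hasSum_geometric_of_norm_lt_one hw2).mul_left w
  have h1w2 : 1 - w ^ 2 ≠ 0 := by
    intro h
    have : w ^ 2 = 1 := by linear_combination -h
    have : ‖w ^ 2‖ = 1 := by rw [this, norm_one]
    linarith
  have hsin : Complex.sin ((m:ℂ) * π * τ) = (w⁻¹ - w) * I / 2 := by
    rw [Complex.sin, hw, ← Complex.exp_neg]
    congr 3 <;> ring_nf
  have hsin' : Complex.sin ((m:ℂ) * π * τ) = I * (1 - w ^ 2) / (2 * w) := by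
    rw [hsin]; field_simp
  have hval : w * (1 - w ^ 2)⁻¹ = (I / 2) / Complex.sin ((m:ℂ) * π * τ) := by
    rw [hsin']
    field_simp
  have hfin := hval ▸ hgeo
  convert hfin using 2 with k
  rw [hw, ← Complex.exp_nat_mul, ← Complex.exp_nat_mul, ← Complex.exp_add]
  congr 1
  push_cast
  ring

set_option maxHeartbeats 1000000 in
theorem stmt14 (τ : ℂ) (hτ : 0 < τ.im) :
    (I / 2) * ∑' n : ℕ, (2 * (n : ℂ) + 1) / Complex.sin ((2 * (n : ℂ) + 1) * π * τ)
      = ∑' n : ℕ, ((∑ d ∈ (2 * n + 1).divisors, (d : ℂ))) *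
          Complex.exp ((2 * (n : ℂ) + 1) * I * π * τ) := by
  set F : ℕ × ℕ → ℂ := fun p =>
    (((2 * p.1 + 1 : ℕ) : ℂ)) *
      Complex.exp ((((2 * p.1 + 1) * (2 * p.2 + 1) : ℕ) : ℂ) * I * π * τ) with hF
  set r : ℝ := Real.exp (-(π * τ.im)) with hrdef
  have hr0 : 0 < r := Real.exp_pos _
  have hr1 : r < 1 := by
    rw [hrdef, Real.exp_lt_one_iff]
    have := Real.pi_pos
    nlinarith
  -- norm of exponential
  have hnormexp : ∀ m : ℕ, ‖Complex.exp ((m : ℂ) * I * π * τ)‖ = r ^ m := by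
    intro m
    rw [Complex.norm_exp, hrdef, ← Real.exp_nat_mul]
    congr 1
    have : ((m:ℂ) * I * π * τ).re = -(m * (π * τ.im)) := by
      simp [Complex.mul_re, Complex.mul_im]; ring
    rw [this]; ring
  -- summability of F
  have hG : Summable (fun n : ℕ => ((n : ℝ) + 1) * r ^ n) := by
    have h1 : Summable (fun n : ℕ => (n : ℝ) ^ 1 * r ^ n) :=
      summable_pow_mul_geometric_of_norm_lt_one 1 (by rwa [Real.norm_eq_abs, abs_of_pos hr0])
    have h2 : Summable (fun n : ℕ => r ^ n) := summable_geometric_of_lt_one hr0.le hr1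
    simpa [add_mul, pow_one] using h1.add h2
  have hg : Summable (fun a : ℕ => ((2 * a + 1 : ℕ) : ℝ) * r ^ (2 * a + 1)) := by
    have hinj : Function.Injective (fun a : ℕ => 2 * a + 1) := by
      intro a b h; dsimp only at h; omega
    have := hG.comp_injective hinj
    apply this.of_nonneg_of_le
    · intro a
      positivity
    · intro a
      simp only [Function.comp]
      push_cast
      nlinarith [pow_nonneg hr0.le (2 * a + 1)]
  have hh : Summable (fun b : ℕ => (r ^ 2) ^ b) :=
    summable_geometric_of_lt_one (by positivity) (by nlinarith)
  have hprod : Summable (fun p : ℕ × ℕ =>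
      (((2 * p.1 + 1 : ℕ) : ℝ) * r ^ (2 * p.1 + 1)) * (r ^ 2) ^ p.2) :=
    hg.mul_of_nonneg hh (fun a => by positivity) (fun b => by positivity)
  have hFsum : Summable F := by
    apply Summable.of_norm_bounded hprod
    intro ⟨a, b⟩
    rw [hF]
    simp only [norm_mul, Complex.norm_natCast]
    rw [hnormexp]
    have hle : 2 * a + 1 + 2 * b ≤ (2 * a + 1) * (2 * b + 1) := by
      have : (2 * a + 1) * (2 * b + 1) = 4 * a * b + 2 * a + 2 * b + 1 := by ring
      omega
    have hpow : r ^ ((2 * a + 1) * (2 * b + 1)) ≤ r ^ (2 * a + 1 + 2 * b) :=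
      pow_le_pow_of_le_one hr0.le hr1.le hle
    calc ((2 * a + 1 : ℕ) : ℝ) * r ^ ((2 * a + 1) * (2 * b + 1))
        ≤ ((2 * a + 1 : ℕ) : ℝ) * r ^ (2 * a + 1 + 2 * b) := by
          apply mul_le_mul_of_nonneg_left hpow (by positivity)
      _ = (((2 * a + 1 : ℕ) : ℝ) * r ^ (2 * a + 1)) * (r ^ 2) ^ b := by
          rw [← pow_mul]
          rw [pow_add]
          ring
  -- per-term hasSum
  have hterm : ∀ n : ℕ, HasSum (fun k : ℕ => F (n, k))
      ((I / 2) * ((2 * (n : ℂ) + 1) / Complex.sin ((2 * (n : ℂ) + 1) * π * τ))) := by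
    intro n
    have h := (sin_hasSum' τ hτ (2 * n + 1) (by omega)).mul_left (((2 * n + 1 : ℕ) : ℂ))
    have hfun : (fun k : ℕ => F (n, k)) = fun k : ℕ =>
        ((2 * n + 1 : ℕ) : ℂ) * Complex.exp ((((2 * n + 1 : ℕ) : ℂ) * (2 * k + 1)) * I * π * τ) := by
      funext k
      rw [hF]
      dsimp only
      congr 2
      push_cast
      ring
    have hval2 : (I / 2) * ((2 * (n : ℂ) + 1) / Complex.sin ((2 * (n : ℂ) + 1) * π * τ))
        = ((2 * n + 1 : ℕ) : ℂ) * ((I / 2) / Complex.sin (((2 * n + 1 : ℕ) : ℂ) * π * τ)) := by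
      push_cast
      ring
    rw [hfun, hval2]
    exact h
  -- reduce LHS to double sum
  rw [← tsum_mul_left]
  have hL : ∀ n : ℕ, (I / 2) * ((2 * (n : ℂ) + 1) / Complex.sin ((2 * (n : ℂ) + 1) * π * τ))
      = ∑' k : ℕ, F (n, k) := fun n => (hterm n).tsum_eq.symm
  calc ∑' n : ℕ, (I / 2) * ((2 * (n : ℂ) + 1) / Complex.sin ((2 * (n : ℂ) + 1) * π * τ))
      = ∑' n : ℕ, ∑' k : ℕ, F (n, k) := tsum_congr hL
    _ = ∑' p : ℕ × ℕ, F p := (Summable.tsum_prod' hFsum hFsum.prod_factor).symm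
    _ = ∑' s : Σ N : ℕ, {p : ℕ × ℕ // p ∈ (2 * N + 1).divisorsAntidiagonal},
          F (oddFactorEquiv'.symm s) := (oddFactorEquiv'.symm.tsum_eq F).symm
    _ = ∑' N : ℕ, ∑' c : {p : ℕ × ℕ // p ∈ (2 * N + 1).divisorsAntidiagonal},
          F (oddFactorEquiv'.symm ⟨N, c⟩) := by
        exact Summable.tsum_sigma' (fun N => Summable.of_finite)
          ((oddFactorEquiv'.symm.summable_iff).mpr hFsum)
    _ = ∑' n : ℕ, ((∑ d ∈ (2 * n + 1).divisors, (d : ℂ))) *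
          Complex.exp ((2 * (n : ℂ) + 1) * I * π * τ) := by
        apply tsum_congr
        intro N
        have hkey : ∀ c : {p : ℕ × ℕ // p ∈ (2 * N + 1).divisorsAntidiagonal},
            F (oddFactorEquiv'.symm ⟨N, c⟩)
              = ((c : ℕ × ℕ).1 : ℂ) * Complex.exp ((2 * (N : ℂ) + 1) * I * π * τ) := by
          rintro ⟨⟨a, b⟩, hmem⟩
          have h := Nat.mem_divisorsAntidiagonal.mp hmem
          have hab : a * b = 2 * N + 1 := h.1
          have ha : a % 2 = 1 := by
            rcases Nat.even_or_odd a with he | ho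
            · exfalso
              obtain ⟨c, hc⟩ := he
              have : a * b = 2 * (c * b) := by rw [hc]; ring
              omega
            · obtain ⟨c, hc⟩ := ho; omega
          have hb : b % 2 = 1 := by
            rcases Nat.even_or_odd b with he | ho
            · exfalso
              obtain ⟨c, hc⟩ := he
              have : a * b = 2 * (a * c) := by rw [hc]; ring
              omega
            · obtain ⟨c, hc⟩ := ho; omega
          have ha' : 2 * ((a - 1) / 2) + 1 = a := by omega
          have hb' : 2 * ((b - 1) / 2) + 1 = b := by omega
          show (((2 * ((a - 1) / 2) + 1 : ℕ) : ℂ)) *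
              Complex.exp ((((2 * ((a - 1) / 2) + 1) * (2 * ((b - 1) / 2) + 1) : ℕ) : ℂ)
                * I * π * τ) = _
          rw [ha', hb', hab]
          push_cast
          ring_nf
        rw [tsum_congr hkey, tsum_fintype]
        rw [Finset.sum_coe_sort ((2 * N + 1).divisorsAntidiagonal)
          (fun p => ((p.1 : ℂ)) * Complex.exp ((2 * (N : ℂ) + 1) * I * π * τ))]
        rw [Nat.sum_divisorsAntidiagonal
          (fun a b => ((a : ℂ)) * Complex.exp ((2 * (N : ℂ) + 1) * I * π * τ))]
        rw [← Finset.sum_mul]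
end

section
/- For |q| < 1, ∏_{n=1}^∞ (1 + q^n) · ∏_{n=0}^∞ (1 − q^{2n+1}) = 1. -/
open Complex Filter

lemma aux_hasProd {f : ℕ → ℂ} (hf : Summable fun n => ‖f n‖) (h1 : ∀ n, ‖f n‖ < 1) :
    HasProd (fun n => 1 + f n) (Complex.exp (∑' n, Complex.log (1 + f n))) := by
  have hne : ∀ n, 1 + f n ≠ 0 := by
    intro n h
    have hfn : f n = -1 := by linear_combination h
    have := h1 n
    rw [hfn] at this
    simp at this
  have hs : Summable fun n => Complex.log (1 + f n) := by
    refine (hf.mul_left (3/2)).of_norm_bounded_eventually ?_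
    have ht : Tendsto (fun n => ‖f n‖) atTop (nhds 0) := hf.tendsto_atTop_zero
    have h2 : ∀ᶠ n in atTop, ‖f n‖ ≤ 1/2 :=
      ht.eventually_le_const (by norm_num : (0:ℝ) < 1/2)
    rw [Nat.cofinite_eq_atTop]
    filter_upwards [h2] with n hn
    exact Complex.norm_log_one_add_half_le_self hn
  have h3 := hs.hasSum.cexp
  have he : Complex.exp ∘ (fun n => Complex.log (1 + f n)) = fun n => 1 + f n :=
    funext fun n => Complex.exp_log (hne n)
  rwa [he] at h3

theorem stmt15 (q : ℂ) (hq : ‖q‖ < 1) :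
    (∏' n : ℕ, (1 + q ^ (n + 1))) * (∏' n : ℕ, (1 - q ^ (2 * n + 1))) = 1 := by
  have hlt : ∀ m : ℕ, ‖q ^ (m + 1)‖ < 1 := fun m => by
    rw [norm_pow]
    calc ‖q‖ ^ (m + 1) ≤ ‖q‖ ^ 1 :=
          pow_le_pow_of_le_one (norm_nonneg q) hq.le (by omega)
      _ = ‖q‖ := pow_one _
      _ < 1 := hq
  have hgeo : Summable fun n : ℕ => ‖q‖ ^ (n + 1) :=
    ((summable_geometric_of_lt_one (norm_nonneg q) hq).mul_left ‖q‖).congr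
      (fun n => by rw [pow_succ, mul_comm])
  have hsum : ∀ e : ℕ → ℕ, (∀ n, n + 1 ≤ e n) → Summable fun n : ℕ => ‖(q ^ e n : ℂ)‖ := by
    intro e he
    refine hgeo.of_nonneg_of_le (fun n => norm_nonneg _) fun n => ?_
    rw [norm_pow]
    exact pow_le_pow_of_le_one (norm_nonneg q) hq.le (he n)
  have hlt' : ∀ (e : ℕ → ℕ), (∀ n, n + 1 ≤ e n) → ∀ n, ‖-(q ^ e n : ℂ)‖ < 1 := by
    intro e he n
    rw [norm_neg, norm_pow]
    calc ‖q‖ ^ e n ≤ ‖q‖ ^ 1 := pow_le_pow_of_le_one (norm_nonneg q) hq.le ((by omega : 1 ≤ n + 1).trans (he n))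
      _ = ‖q‖ := pow_one _
      _ < 1 := hq
  have PA := aux_hasProd (f := fun n => q ^ (n + 1)) (hsum _ (fun n => le_refl _)) hlt
  have PB := aux_hasProd (f := fun n => -(q ^ (2 * n + 1)))
    ((hsum (fun n => 2 * n + 1) (fun n => by show n + 1 ≤ 2 * n + 1; omega)).congr
      (fun n => (norm_neg _).symm))
    (hlt' _ (fun n => by show n + 1 ≤ 2 * n + 1; omega))
  have PC := aux_hasProd (f := fun n => -(q ^ (2 * n + 2)))
    ((hsum (fun n => 2 * n + 2) (fun n => by show n + 1 ≤ 2 * n + 2; omega)).congr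
      (fun n => (norm_neg _).symm))
    (hlt' _ (fun n => by show n + 1 ≤ 2 * n + 2; omega))
  have PD := aux_hasProd (f := fun n => -(q ^ (n + 1)))
    ((hsum (fun n => n + 1) (fun n => le_refl _)).congr (fun n => (norm_neg _).symm))
    (hlt' _ (fun n => le_refl _))
  simp only [← sub_eq_add_neg] at PB PC PD
  -- split D into even/odd: B * C = D
  have hsplit : (∏' k : ℕ, (1 - q ^ (2 * k + 1))) * (∏' k : ℕ, (1 - q ^ (2 * k + 2)))
      = ∏' n : ℕ, (1 - q ^ (n + 1)) := by
    have hmB : Multipliable fun k : ℕ => 1 - q ^ (2 * k + 1) := HasProd.multipliable PB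
    have hmC : Multipliable fun k : ℕ => 1 - q ^ (2 * k + 1 + 1) :=
      (HasProd.multipliable PC).congr (fun k => by norm_num)
    have h := tprod_even_mul_odd (f := fun n : ℕ => 1 - q ^ (n + 1)) hmB hmC
    rw [← h]
  have hAD : (∏' n : ℕ, (1 + q ^ (n + 1))) * (∏' n : ℕ, (1 - q ^ (n + 1)))
      = ∏' n : ℕ, (1 - q ^ (2 * n + 2)) := by
    rw [← Multipliable.tprod_mul (HasProd.multipliable PA) (HasProd.multipliable PD)]
    refine tprod_congr fun n => ?_
    rw [show 2 * n + 2 = (n + 1) + (n + 1) by ring, pow_add]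
    ring
  have hCne : (∏' n : ℕ, (1 - q ^ (2 * n + 2))) ≠ 0 := by
    rw [HasProd.tprod_eq PC]
    exact Complex.exp_ne_zero _
  have key : ((∏' n : ℕ, (1 + q ^ (n + 1))) * (∏' n : ℕ, (1 - q ^ (2 * n + 1)))) *
      (∏' n : ℕ, (1 - q ^ (2 * n + 2))) = 1 * (∏' n : ℕ, (1 - q ^ (2 * n + 2))) := by
    rw [one_mul, mul_assoc, hsplit, hAD]
  exact mul_right_cancel₀ hCne key
end
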